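/- If TWO has a winning strategy in the Menger game on a topological space X, then X is both productively Lindelöf and productively Menger: for every Lindelöf space Y the product X × Y is Lindelöf, and for every Menger space Y the product X × Y is Menger. No separation axioms are assumed. -/

import Mathlib

open Set

/-- `GDom R` is the set of dominating families of the relation `R`:
sets `Z ⊆ B` such that every `a ∈ A` is dominated by some `b ∈ Z`. -/
def GDom {α β : Type*} (R : α → β → Prop) : Set (Set β) :=
  {Z | ∀ a : α, ∃ b ∈ Z, R a b}

/-- A relation is total: every element of the domain is dominated by something. -/
def IsTotalRel {α β : Type*} (R : α → β → Prop) : Prop :=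
  ∀ a : α, ∃ b : β, R a b

/-- The product of two relations. -/
def GProd {α β α' β' : Type*} (R : α → β → Prop) (R' : α' → β' → Prop) :
    α × α' → β × β' → Prop :=
  fun a b => R a.1 b.1 ∧ R' a.2 b.2

/-- The finite history consisting of the first `n` moves of the sequence `b`. -/
def GHist {β : Type*} (b : ℕ → β) (n : ℕ) : List β :=
  List.ofFn fun i : Fin n => b i

/-- ONE has a winning strategy in the game `G(P,Q)`: in inning `n` ONE plays `aₙ ∈ A`,
TWO answers `bₙ` with `R aₙ bₙ`; ONE wins iff `{bₙ : n} ∈ GDom T`. -/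
def OneWinsG {α β γ : Type*} (R : α → β → Prop) (T : γ → β → Prop) : Prop :=
  ∃ σ : List β → α, ∀ b : ℕ → β,
    (∀ n, R (σ (GHist b n)) (b n)) → Set.range b ∈ GDom T

/-- TWO has a winning strategy in the game `G(P,Q)`. -/
def TwoWinsG {α β γ : Type*} (R : α → β → Prop) (T : γ → β → Prop) : Prop :=
  ∃ τ : List α → β, ∀ a : ℕ → α,
    (∀ n, R (a n) (τ (GHist a (n + 1)))) ∧
    Set.range (fun n => τ (GHist a (n + 1))) ∉ GDom T

/-- ONE has a winning strategy in the game `G₁(𝒜,ℬ)`: in inning `n` ONE plays `Aₙ ∈ 𝒜`,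
TWO answers `bₙ ∈ Aₙ`; TWO wins iff `{bₙ : n} ∈ ℬ`. -/
def OneWinsG1 {β : Type*} (𝒜 ℬ : Set (Set β)) : Prop :=
  ∃ σ : List β → Set β, (∀ h, σ h ∈ 𝒜) ∧
    ∀ b : ℕ → β, (∀ n, b n ∈ σ (GHist b n)) → Set.range b ∉ ℬ

/-- TWO has a winning strategy in the game `G₁(𝒜,ℬ)`. -/
def TwoWinsG1 {β : Type*} (𝒜 ℬ : Set (Set β)) : Prop :=
  ∃ τ : List (Set β) → β, ∀ S : ℕ → Set β, (∀ n, S n ∈ 𝒜) →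
    (∀ n, τ (GHist S (n + 1)) ∈ S n) ∧
    Set.range (fun n => τ (GHist S (n + 1))) ∈ ℬ

/-- TWO has a winning strategy in the game `G_fin(𝒜,ℬ)`: in inning `n` ONE plays `Aₙ ∈ 𝒜`,
TWO answers a finite `Fₙ ⊆ Aₙ`; TWO wins iff `⋃ₙ Fₙ ∈ ℬ`. -/
def TwoWinsGfin {β : Type*} (𝒜 ℬ : Set (Set β)) : Prop :=
  ∃ τ : List (Set β) → Set β, ∀ S : ℕ → Set β, (∀ n, S n ∈ 𝒜) →
    (∀ n, τ (GHist S (n + 1)) ⊆ S n ∧ (τ (GHist S (n + 1))).Finite) ∧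
    (⋃ n, τ (GHist S (n + 1))) ∈ ℬ

/-- `(𝒜,ℬ)`-Lindelöf: every member of `𝒜` has a countable subset belonging to `ℬ`. -/
def LindelofFam {β : Type*} (𝒜 ℬ : Set (Set β)) : Prop :=
  ∀ S ∈ 𝒜, ∃ C ⊆ S, C.Countable ∧ C ∈ ℬ

/-- The selection principle `S₁(𝒜,ℬ)`. -/
def SelS1 {β : Type*} (𝒜 ℬ : Set (Set β)) : Prop :=
  ∀ A : ℕ → Set β, (∀ n, A n ∈ 𝒜) →
    ∃ b : ℕ → β, (∀ n, b n ∈ A n) ∧ Set.range b ∈ ℬ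

/-- The selection principle `S_fin(𝒜,ℬ)`. -/
def SelSfin {β : Type*} (𝒜 ℬ : Set (Set β)) : Prop :=
  ∀ A : ℕ → Set β, (∀ n, A n ∈ 𝒜) →
    ∃ F : ℕ → Set β, (∀ n, F n ⊆ A n ∧ (F n).Finite) ∧ (⋃ n, F n) ∈ ℬ

/-- `𝒪_X`: the family of open covers of `X`. -/
def OpenCovers (X : Type*) [TopologicalSpace X] : Set (Set (Set X)) :=
  {𝒰 | (∀ U ∈ 𝒰, IsOpen U) ∧ ⋃₀ 𝒰 = Set.univ}

/-- ONE has a winning strategy in the point-open game on `X`. -/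
def OneWinsPointOpen (X : Type*) [TopologicalSpace X] : Prop :=
  ∃ σ : List (Set X) → X, ∀ U : ℕ → Set X,
    (∀ n, IsOpen (U n) ∧ σ (GHist U n) ∈ U n) → Set.range U ∈ OpenCovers X

/-- TWO has a winning strategy in the point-open game on `X`. -/
def TwoWinsPointOpen (X : Type*) [TopologicalSpace X] : Prop :=
  ∃ τ : List X → Set X, ∀ x : ℕ → X,
    (∀ n, IsOpen (τ (GHist x (n + 1))) ∧ x n ∈ τ (GHist x (n + 1))) ∧
    Set.range (fun n => τ (GHist x (n + 1))) ∉ OpenCovers X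

/-- `𝔇_X`: the family of dense subsets of `X`. -/
def DenseSets (X : Type*) [TopologicalSpace X] : Set (Set X) :=
  {D | Dense D}

/-- ONE has a winning strategy in the point-picking game `G^D_ω(X)` of Berner and Juhász. -/
def OneWinsPointPicking (X : Type*) [TopologicalSpace X] : Prop :=
  ∃ σ : List X → Set X, (∀ h, IsOpen (σ h) ∧ (σ h).Nonempty) ∧
    ∀ x : ℕ → X, (∀ n, x n ∈ σ (GHist x n)) → Dense (Set.range x)

/-- TWO has a winning strategy in the point-picking game `G^D_ω(X)`. -/
def TwoWinsPointPicking (X : Type*) [TopologicalSpace X] : Prop :=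
  ∃ τ : List (Set X) → X, ∀ U : ℕ → Set X,
    (∀ n, IsOpen (U n) ∧ (U n).Nonempty) →
    (∀ n, τ (GHist U (n + 1)) ∈ U n) ∧
    ¬ Dense (Set.range fun n => τ (GHist U (n + 1)))

/-- `𝒟_X`: families of open sets whose union is dense in `X`. -/
def DenseUnionFams (X : Type*) [TopologicalSpace X] : Set (Set (Set X)) :=
  {𝒰 | (∀ U ∈ 𝒰, IsOpen U) ∧ Dense (⋃₀ 𝒰)}

/-- ONE has a winning strategy in Tkachuk's game `θ(X)`. -/
def OneWinsTheta (X : Type*) [TopologicalSpace X] : Prop :=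
  ∃ σ : List (Set X) → X, ∀ U : ℕ → Set X,
    (∀ n, IsOpen (U n) ∧ σ (GHist U n) ∈ U n) → Dense (⋃ n, U n)

/-- TWO has a winning strategy in Tkachuk's game `θ(X)`. -/
def TwoWinsTheta (X : Type*) [TopologicalSpace X] : Prop :=
  ∃ τ : List X → Set X, ∀ x : ℕ → X,
    (∀ n, IsOpen (τ (GHist x (n + 1))) ∧ x n ∈ τ (GHist x (n + 1))) ∧
    ¬ Dense (⋃ n, τ (GHist x (n + 1)))

/-- `Ω_x`: the family of subsets of `X` having `x` in their closure. -/
def OmegaPt {X : Type*} [TopologicalSpace X] (x : X) : Set (Set X) :=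
  {A | x ∈ closure A}

/-- ONE has a winning strategy in Gruenhage's game `G^c_{O,P}(X,x)`. -/
def OneWinsGruenhage {X : Type*} [TopologicalSpace X] (x : X) : Prop :=
  ∃ σ : List X → Set X, (∀ h, IsOpen (σ h) ∧ x ∈ σ h) ∧
    ∀ y : ℕ → X, (∀ n, y n ∈ σ (GHist y n)) → x ∈ closure (Set.range y)

/-- TWO has a winning strategy in Gruenhage's game `G^c_{O,P}(X,x)`. -/
def TwoWinsGruenhage {X : Type*} [TopologicalSpace X] (x : X) : Prop :=
  ∃ τ : List (Set X) → X, ∀ V : ℕ → Set X,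
    (∀ n, IsOpen (V n) ∧ x ∈ V n) →
    (∀ n, τ (GHist V (n + 1)) ∈ V n) ∧
    x ∉ closure (Set.range fun n => τ (GHist V (n + 1)))

/-- ONE has a winning strategy in the compact-open game on `X`. -/
def OneWinsCompactOpen (X : Type*) [TopologicalSpace X] : Prop :=
  ∃ σ : List (Set X) → Set X, (∀ h, IsCompact (σ h)) ∧
    ∀ U : ℕ → Set X, (∀ n, IsOpen (U n) ∧ σ (GHist U n) ⊆ U n) →
      (⋃ n, U n) = Set.univ

/-- `⪯` is downwards `P`-compatible. -/
def DownwardsCompat {α β : Type*} (R : α → β → Prop) (le : β → β → Prop) : Prop :=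
  ∀ a b₁ b₂, R a b₁ → R a b₂ → ∃ b, R a b ∧ le b b₁ ∧ le b b₂

/-- `⪯` is upwards `Q`-compatible. -/
def UpwardsCompat {γ β : Type*} (T : γ → β → Prop) (le : β → β → Prop) : Prop :=
  ∀ c b₁ b₂, T c b₁ → le b₁ b₂ → T c b₂

/-- `⪯` is countably downwards `P`-compatible. -/
def CountablyDownwardsCompat {α β : Type*} (R : α → β → Prop) (le : β → β → Prop) : Prop :=
  ∀ a, ∀ E : Set β, E.Countable → E.Nonempty → (∀ b ∈ E, R a b) →
    ∃ b', R a b' ∧ ∀ b ∈ E, le b' b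

/-- A relation is `ℵ₀`-preserving if some partial order on `B` is both upwards
compatible and countably downwards compatible with it. -/
def Aleph0Preserving {α β : Type*} (R : α → β → Prop) : Prop :=
  ∃ le : β → β → Prop, IsPartialOrder β le ∧
    UpwardsCompat R le ∧ CountablyDownwardsCompat R le

/-- `Dom_γ(T)`: the γ-dominating sequences of the relation `T`. -/
def GDomGamma {γ β : Type*} (T : γ → β → Prop) : Set (ℕ → β) :=
  {z | ∀ c : γ, {n : ℕ | ¬ T c (z n)}.Finite}

/-- ONE has a winning strategy in the game `G_γ(P,Q)`. -/
def OneWinsGgamma {α β γ : Type*} (R : α → β → Prop) (T : γ → β → Prop) : Prop :=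
  ∃ σ : List β → α, ∀ b : ℕ → β,
    (∀ n, R (σ (GHist b n)) (b n)) → b ∈ GDomGamma T

/-- TWO has a winning strategy in the game `G_γ(P,Q)`. -/
def TwoWinsGgamma {α β γ : Type*} (R : α → β → Prop) (T : γ → β → Prop) : Prop :=
  ∃ τ : List α → β, ∀ a : ℕ → α,
    (∀ n, R (a n) (τ (GHist a (n + 1)))) ∧
    (fun n => τ (GHist a (n + 1))) ∉ GDomGamma T

/-- ONE has a winning strategy in the game `G₁(𝒜, Dom_γ(T))`. -/
def OneWinsG1gamma {β γ : Type*} (𝒜 : Set (Set β)) (T : γ → β → Prop) : Prop :=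
  ∃ σ : List β → Set β, (∀ h, σ h ∈ 𝒜) ∧
    ∀ b : ℕ → β, (∀ n, b n ∈ σ (GHist b n)) → b ∉ GDomGamma T

/-- TWO has a winning strategy in the game `G₁(𝒜, Dom_γ(T))`. -/
def TwoWinsG1gamma {β γ : Type*} (𝒜 : Set (Set β)) (T : γ → β → Prop) : Prop :=
  ∃ τ : List (Set β) → β, ∀ S : ℕ → Set β, (∀ n, S n ∈ 𝒜) →
    (∀ n, τ (GHist S (n + 1)) ∈ S n) ∧
    (fun n => τ (GHist S (n + 1))) ∈ GDomGamma T

/-- The `ℵ₀`-modification of a relation: moves become nonempty countable subsets of `B`,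
dominated pointwise. -/
def CountMod {α β : Type*} (R : α → β → Prop) :
    α → {E : Set β // E.Countable ∧ E.Nonempty} → Prop :=
  fun a E => ∀ b ∈ E.1, R a b

/-!
Fix a winning strategy `τ` of TWO in the Menger game on `X` and open covers `W ι` of `X × Y`.
For `y : Y`, the open sets `U ⊆ X` with `U ×ˢ V` inside one member of a cover for some open `V ∋ y`
form an open cover of `X` (`rectCover`). At a node `p` of a tree of finite plays, ONE may
continue with such a cover aimed at any `y`; TWO's finite answer yields an open neighbourhood
`shrink p y n` of `y` on which all its rectangles stay inside the chosen members. For fixed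
`p, n` these neighbourhoods cover `Y`, so the Lindelöf (Menger) property of `Y` selects
countably (finitely) many aims. A point `(x, y')` determines a branch whose aims always catch
`y'`; TWO wins the play along it, so `x` lies in one of TWO's answers `U`, and `(x, y')` lies in
the member of the cover chosen for `U`.
-/

section Gfin

variable {β : Type*}

theorem GHist_succ (b : ℕ → β) (n : ℕ) : GHist b (n + 1) = GHist b n ++ [b n] := by
  rw [GHist, List.ofFn_succ', List.concat_eq_append]
  rfl

theorem GHist_getD (l : List β) (d : β) : GHist (fun n => l.getD n d) l.length = l := by
  simp [GHist]

def IsWinningGfinStrategy (𝒜 ℬ : Set (Set β)) (τ : List (Set β) → Set β) : Prop :=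
  ∀ S : ℕ → Set β, (∀ n, S n ∈ 𝒜) →
    (∀ n, τ (GHist S (n + 1)) ⊆ S n ∧ (τ (GHist S (n + 1))).Finite) ∧
    (⋃ n, τ (GHist S (n + 1))) ∈ ℬ

theorem IsWinningGfinStrategy.answer_subset_finite {𝒜 ℬ : Set (Set β)}
    {τ : List (Set β) → Set β} (hτ : IsWinningGfinStrategy 𝒜 ℬ τ) {L : List (Set β)}
    (hL : ∀ A ∈ L, A ∈ 𝒜) {A : Set β} (hA : A ∈ 𝒜) :
    τ (L ++ [A]) ⊆ A ∧ (τ (L ++ [A])).Finite := by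
  have hS : ∀ n, (L ++ [A]).getD n A ∈ 𝒜 := by
    intro n
    rcases lt_or_ge n (L ++ [A]).length with h | h
    · rw [List.getD_eq_getElem _ _ h]
      rcases List.mem_append.mp (List.getElem_mem h) with h' | h'
      · exact hL _ h'
      · rwa [List.mem_singleton.mp h']
    · rwa [List.getD_eq_default _ _ h]
  have hhist := GHist_getD (L ++ [A]) A
  have hlast : (L ++ [A]).getD L.length A = A := by simp
  rw [List.length_append, List.length_singleton] at hhist
  simpa only [hhist, hlast] using (hτ _ hS).1 L.length

end Gfin

section Rectangles

variable {X Y : Type*} [TopologicalSpace X] [TopologicalSpace Y]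

def IsRectWitness (𝒲 : Set (Set (X × Y))) (y : Y) (U : Set X) (VO : Set Y × Set (X × Y)) :
    Prop :=
  IsOpen VO.1 ∧ y ∈ VO.1 ∧ VO.2 ∈ 𝒲 ∧ U ×ˢ VO.1 ⊆ VO.2

def rectCover (𝒲 : Set (Set (X × Y))) (y : Y) : Set (Set X) :=
  {U | IsOpen U ∧ ∃ VO, IsRectWitness 𝒲 y U VO}

noncomputable def rectWitness (𝒲 : Set (Set (X × Y))) (y : Y) (U : Set X) :
    Set Y × Set (X × Y) :=
  Classical.epsilon (IsRectWitness 𝒲 y U)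

theorem rectWitness_spec {𝒲 : Set (Set (X × Y))} {y : Y} {U : Set X}
    (hU : U ∈ rectCover 𝒲 y) : IsRectWitness 𝒲 y U (rectWitness 𝒲 y U) :=
  Classical.epsilon_spec hU.2

theorem rectCover_mem_openCovers {𝒲 : Set (Set (X × Y))} (h𝒲 : 𝒲 ∈ OpenCovers (X × Y))
    (y : Y) : rectCover 𝒲 y ∈ OpenCovers X := by
  refine ⟨fun U hU => hU.1, eq_univ_of_forall fun x => ?_⟩
  obtain ⟨O, hO, hxy⟩ := mem_sUnion.mp (h𝒲.2.symm ▸ mem_univ (x, y))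
  obtain ⟨U, V, hU, hV, hxU, hyV, hUV⟩ := isOpen_prod_iff.mp (h𝒲.1 O hO) x y hxy
  exact ⟨U, ⟨hU, (V, O), hV, hyV, hO, hUV⟩, hxU⟩

end Rectangles

theorem LindelofFam.exists_countable_iUnion_eq_univ {Y α : Type*} [TopologicalSpace Y]
    (hY : LindelofFam (OpenCovers Y) (OpenCovers Y)) {f : α → Set Y}
    (hf : range f ∈ OpenCovers Y) : ∃ B : Set α, B.Countable ∧ ⋃ a ∈ B, f a = univ := by
  obtain ⟨C, hCf, hC, hCcov⟩ := hY _ hf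
  obtain ⟨B, rfl, hinj⟩ := exists_image_eq_injOn_of_subset_range hCf
  exact ⟨B, (mapsTo_image f B).countable_of_injOn hinj hC, sUnion_image f B ▸ hCcov.2⟩

theorem SelSfin.exists_finite_iUnion_eq_univ {Y α : Type*} [TopologicalSpace Y]
    (hY : SelSfin (OpenCovers Y) (OpenCovers Y)) {f : ℕ → α → Set Y}
    (hf : ∀ n, range (f n) ∈ OpenCovers Y) :
    ∃ B : ℕ → Set α, (∀ n, (B n).Finite) ∧ ⋃ n, ⋃ a ∈ B n, f n a = univ := by
  obtain ⟨C, hC, hCcov⟩ := hY _ hf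
  choose B hBC hinj using fun n => exists_image_eq_injOn_of_subset_range (hC n).1
  refine ⟨B, fun n => Finite.of_finite_image (hBC n ▸ (hC n).2) (hinj n), ?_⟩
  simpa only [← sUnion_image, hBC, sUnion_iUnion] using hCcov.2

namespace MengerProduct

section ValidNodes

variable {Y : Type*}

def validNodes (B : List (Y × ℕ) → ℕ → Set Y) : List ℕ → Set (List (Y × ℕ))
  | [] => {[]}
  | n :: ι => ⋃ p ∈ validNodes B ι, (fun y => (y, n) :: p) '' B p n

theorem map_snd_of_mem_validNodes {B : List (Y × ℕ) → ℕ → Set Y} {ι : List ℕ}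
    {p : List (Y × ℕ)} (hp : p ∈ validNodes B ι) : p.map Prod.snd = ι := by
  induction ι generalizing p with
  | nil => rw [hp]; rfl
  | cons n ι ih =>
    obtain ⟨q, hq, y, -, rfl⟩ := mem_iUnion₂.mp hp
    simp [ih hq]

theorem validNodes_finite {B : List (Y × ℕ) → ℕ → Set Y} (hB : ∀ p n, (B p n).Finite) :
    ∀ ι, (validNodes B ι).Finite
  | [] => finite_singleton _
  | n :: ι => (validNodes_finite hB ι).biUnion fun p _ => (hB p n).image _

theorem validNodes_countable {B : List (Y × ℕ) → ℕ → Set Y}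
    (hB : ∀ p n, (B p n).Countable) : ∀ ι, (validNodes B ι).Countable
  | [] => countable_singleton _
  | n :: ι => (validNodes_countable hB ι).biUnion fun p _ => (hB p n).image _

end ValidNodes

variable {X Y : Type*} [TopologicalSpace X] [TopologicalSpace Y]
  (τ : List (Set (Set X)) → Set (Set X)) (W : List ℕ → Set (Set (X × Y)))

/- A node `p` is the list of steps `(aim, index)` leading to it, latest first. The step
`(y, n)` from `p` uses the cover `W (n :: p.map Prod.snd)`: a finitely branching selector
creates only finitely many nodes with a given list of indices, so each `selection ι` is finite. -/
def move (p : List (Y × ℕ)) (y : Y) (n : ℕ) : Set (Set X) :=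
  rectCover (W (n :: p.map Prod.snd)) y

def hist : List (Y × ℕ) → List (Set (Set X))
  | [] => []
  | (y, n) :: p => hist p ++ [move W p y n]

def answer (p : List (Y × ℕ)) (y : Y) (n : ℕ) : Set (Set X) :=
  τ (hist W ((y, n) :: p))

def shrink (p : List (Y × ℕ)) (y : Y) (n : ℕ) : Set Y :=
  ⋂ U ∈ answer τ W p y n, (rectWitness (W (n :: p.map Prod.snd)) y U).1

def IsSelector (B : List (Y × ℕ) → ℕ → Set Y) : Prop :=
  ∀ p, ⋃ n, ⋃ y ∈ B p n, shrink τ W p y n = univ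

def selection (B : List (Y × ℕ) → ℕ → Set Y) : List ℕ → Set (Set (X × Y))
  | [] => ∅
  | n :: ι => ⋃ p ∈ validNodes B ι, ⋃ y ∈ B p n,
      (fun U => (rectWitness (W (n :: ι)) y U).2) '' answer τ W p y n

variable {τ W}

theorem hist_mem_openCovers (hW : ∀ ι, W ι ∈ OpenCovers (X × Y)) :
    ∀ p : List (Y × ℕ), ∀ A ∈ hist W p, A ∈ OpenCovers X
  | [] => by simp [hist]
  | (y, n) :: p => by
    simp only [hist, List.mem_append, List.mem_singleton]
    rintro A (hA | rfl)
    exacts [hist_mem_openCovers hW p A hA, rectCover_mem_openCovers (hW _) y]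

theorem answer_subset_finite (hτ : IsWinningGfinStrategy (OpenCovers X) (OpenCovers X) τ)
    (hW : ∀ ι, W ι ∈ OpenCovers (X × Y)) (p : List (Y × ℕ)) (y : Y) (n : ℕ) :
    answer τ W p y n ⊆ move W p y n ∧ (answer τ W p y n).Finite :=
  hτ.answer_subset_finite (hist_mem_openCovers hW p) (rectCover_mem_openCovers (hW _) y)

theorem isRectWitness_of_mem_answer
    (hτ : IsWinningGfinStrategy (OpenCovers X) (OpenCovers X) τ)
    (hW : ∀ ι, W ι ∈ OpenCovers (X × Y)) {p : List (Y × ℕ)} {y : Y} {n : ℕ} {U : Set X}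
    (hU : U ∈ answer τ W p y n) :
    IsRectWitness (W (n :: p.map Prod.snd)) y U (rectWitness (W (n :: p.map Prod.snd)) y U) :=
  rectWitness_spec ((answer_subset_finite hτ hW p y n).1 hU)

theorem range_shrink_mem_openCovers
    (hτ : IsWinningGfinStrategy (OpenCovers X) (OpenCovers X) τ)
    (hW : ∀ ι, W ι ∈ OpenCovers (X × Y)) (p : List (Y × ℕ)) (n : ℕ) :
    range (fun y => shrink τ W p y n) ∈ OpenCovers Y := by
  refine ⟨?_, eq_univ_of_forall fun y => ⟨_, mem_range_self y, ?_⟩⟩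
  · rintro _ ⟨y, rfl⟩
    exact (answer_subset_finite hτ hW p y n).2.isOpen_biInter fun U hU =>
      (isRectWitness_of_mem_answer hτ hW hU).1
  · exact mem_iInter₂.mpr fun U hU => (isRectWitness_of_mem_answer hτ hW hU).2.1

theorem selection_subset (hτ : IsWinningGfinStrategy (OpenCovers X) (OpenCovers X) τ)
    (hW : ∀ ι, W ι ∈ OpenCovers (X × Y)) (B : List (Y × ℕ) → ℕ → Set Y) :
    ∀ ι, selection τ W B ι ⊆ W ι
  | [] => empty_subset _
  | n :: ι => by
    simp only [selection, iUnion_subset_iff, image_subset_iff]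
    intro p hp y _ U hU
    have := (isRectWitness_of_mem_answer hτ hW hU).2.2.1
    rwa [map_snd_of_mem_validNodes hp] at this

theorem selection_finite (hτ : IsWinningGfinStrategy (OpenCovers X) (OpenCovers X) τ)
    (hW : ∀ ι, W ι ∈ OpenCovers (X × Y)) {B : List (Y × ℕ) → ℕ → Set Y}
    (hB : ∀ p n, (B p n).Finite) : ∀ ι, (selection τ W B ι).Finite
  | [] => finite_empty
  | n :: ι => (validNodes_finite hB ι).biUnion fun p _ => (hB p n).biUnion fun y _ =>
      (answer_subset_finite hτ hW p y n).2.image _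

theorem iUnion_selection_countable
    (hτ : IsWinningGfinStrategy (OpenCovers X) (OpenCovers X) τ)
    (hW : ∀ ι, W ι ∈ OpenCovers (X × Y)) {B : List (Y × ℕ) → ℕ → Set Y}
    (hB : ∀ p n, (B p n).Countable) : (⋃ ι, selection τ W B ι).Countable := by
  refine countable_iUnion fun ι => ?_
  cases ι with
  | nil => exact countable_empty
  | cons n ι =>
    exact (validNodes_countable hB ι).biUnion fun p _ => (hB p n).biUnion fun y _ =>
      (answer_subset_finite hτ hW p y n).2.countable.image _

theorem sUnion_iUnion_selection (hτ : IsWinningGfinStrategy (OpenCovers X) (OpenCovers X) τ)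
    (hW : ∀ ι, W ι ∈ OpenCovers (X × Y)) {B : List (Y × ℕ) → ℕ → Set Y}
    (hB : IsSelector τ W B) : ⋃₀ ⋃ ι, selection τ W B ι = univ := by
  refine eq_univ_of_forall fun ⟨x, y'⟩ => ?_
  have hstep : ∀ p, ∃ n, ∃ y ∈ B p n, y' ∈ shrink τ W p y n := fun p => by
    have hp : y' ∈ ⋃ n, ⋃ y ∈ B p n, shrink τ W p y n := (hB p).symm ▸ mem_univ y'
    simpa only [mem_iUnion, exists_prop] using hp
  choose n y hyB hy' using hstep
  let F : ℕ → List (Y × ℕ) := fun m => Nat.rec [] (fun _ p => (y p, n p) :: p) m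
  have hvalid : ∀ m, F m ∈ validNodes B ((F m).map Prod.snd) := by
    intro m
    induction m with
    | zero => rfl
    | succ m ih => exact mem_biUnion ih (mem_image_of_mem _ (hyB (F m)))
  let S : ℕ → Set (Set X) := fun m => move W (F m) (y (F m)) (n (F m))
  have hS : ∀ m, GHist S m = hist W (F m) := by
    intro m
    induction m with
    | zero => rfl
    | succ m ih => rw [GHist_succ, ih]; rfl
  have hwin := (hτ S fun m => rectCover_mem_openCovers (hW _) _).2.2
  obtain ⟨U, hU, hxU⟩ := mem_sUnion.mp (hwin ▸ mem_univ x)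
  obtain ⟨m, hUm⟩ := mem_iUnion.mp hU
  rw [hS] at hUm
  set p := F m
  obtain ⟨-, -, hO, hUVO⟩ := isRectWitness_of_mem_answer hτ hW hUm
  refine mem_sUnion.mpr ⟨_, mem_iUnion.mpr ⟨n p :: p.map Prod.snd, ?_⟩,
    hUVO ⟨hxU, mem_iInter₂.mp (hy' p) U hUm⟩⟩
  exact mem_biUnion (hvalid m) (mem_biUnion (hyB p) (mem_image_of_mem _ hUm))

theorem exists_countable_selector
    (hτ : IsWinningGfinStrategy (OpenCovers X) (OpenCovers X) τ)
    (hW : ∀ ι, W ι ∈ OpenCovers (X × Y)) (hY : LindelofFam (OpenCovers Y) (OpenCovers Y)) :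
    ∃ B : List (Y × ℕ) → ℕ → Set Y, (∀ p n, (B p n).Countable) ∧ IsSelector τ W B := by
  choose B hB hcov using fun p n =>
    hY.exists_countable_iUnion_eq_univ (range_shrink_mem_openCovers hτ hW p n)
  refine ⟨B, hB, fun p => eq_univ_of_univ_subset ?_⟩
  exact (hcov p 0).symm.subset.trans
    (subset_iUnion (fun n => ⋃ y ∈ B p n, shrink τ W p y n) 0)

theorem exists_finite_selector
    (hτ : IsWinningGfinStrategy (OpenCovers X) (OpenCovers X) τ)
    (hW : ∀ ι, W ι ∈ OpenCovers (X × Y)) (hY : SelSfin (OpenCovers Y) (OpenCovers Y)) :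
    ∃ B : List (Y × ℕ) → ℕ → Set Y, (∀ p n, (B p n).Finite) ∧ IsSelector τ W B := by
  choose B hB hcov using fun p =>
    hY.exists_finite_iUnion_eq_univ (range_shrink_mem_openCovers hτ hW p)
  exact ⟨B, hB, hcov⟩

end MengerProduct

open MengerProduct

section Product

variable {X Y : Type*} [TopologicalSpace X] [TopologicalSpace Y]

theorem TwoWinsGfin.lindelofFam_prod (h : TwoWinsGfin (OpenCovers X) (OpenCovers X))
    (hY : LindelofFam (OpenCovers Y) (OpenCovers Y)) :
    LindelofFam (OpenCovers (X × Y)) (OpenCovers (X × Y)) := by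
  obtain ⟨τ, hτ⟩ := h
  intro 𝒮 h𝒮
  have hW : ∀ _ : List ℕ, 𝒮 ∈ OpenCovers (X × Y) := fun _ => h𝒮
  obtain ⟨B, hB, hsel⟩ := exists_countable_selector hτ hW hY
  have hsub : ⋃ ι, selection τ (fun _ => 𝒮) B ι ⊆ 𝒮 :=
    iUnion_subset (selection_subset hτ hW B)
  exact ⟨_, hsub, iUnion_selection_countable hτ hW hB, fun U hU => h𝒮.1 U (hsub hU),
    sUnion_iUnion_selection hτ hW hsel⟩

theorem TwoWinsGfin.selSfin_prod (h : TwoWinsGfin (OpenCovers X) (OpenCovers X))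
    (hY : SelSfin (OpenCovers Y) (OpenCovers Y)) :
    SelSfin (OpenCovers (X × Y)) (OpenCovers (X × Y)) := by
  obtain ⟨τ, hτ⟩ := h
  intro A hA
  have hW : ∀ ι : List ℕ, A (Encodable.encode ι) ∈ OpenCovers (X × Y) := fun ι => hA _
  obtain ⟨B, hB, hsel⟩ := exists_finite_selector hτ hW hY
  set F : ℕ → Set (Set (X × Y)) := fun k => selection τ _ B (Denumerable.ofNat (List ℕ) k)
  have hFA : ∀ k, F k ⊆ A k := fun k => by
    simpa using selection_subset hτ hW B (Denumerable.ofNat (List ℕ) k)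
  have hsurj : Function.Surjective (Denumerable.ofNat (List ℕ)) :=
    fun ι => ⟨_, Denumerable.ofNat_encode ι⟩
  have hFcov : ⋃ k, F k = ⋃ ι, selection τ _ B ι := hsurj.iUnion_comp _
  refine ⟨F, fun k => ⟨hFA k, selection_finite hτ hW hB _⟩, ?_, ?_⟩
  · simp only [mem_iUnion]
    rintro U ⟨k, hU⟩
    exact (hA k).1 U (hFA k hU)
  · rw [hFcov]
    exact sUnion_iUnion_selection hτ hW hsel

end Product

/-- If TWO has a winning strategy in the Menger game on `X`, then `X`
is both productively Lindelöf and productively Menger. -/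
theorem statement15 {X : Type*} [TopologicalSpace X]
    (h : TwoWinsGfin (OpenCovers X) (OpenCovers X))
    (Y : Type*) [TopologicalSpace Y] :
    (LindelofFam (OpenCovers Y) (OpenCovers Y) →
      LindelofFam (OpenCovers (X × Y)) (OpenCovers (X × Y))) ∧
    (SelSfin (OpenCovers Y) (OpenCovers Y) →
      SelSfin (OpenCovers (X × Y)) (OpenCovers (X × Y))) :=
  ⟨h.lindelofFam_prod, h.selSfin_prod⟩
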